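/- arXiv:1801.05158 — 2 statements merged into one kernel-verified Lean document; each statement's English description precedes it below -/
import Mathlib

section
/- Let F be a field of characteristic p > 0, G a group, c a central element of G of order p, g, h ∈ G, and w = 1 + (g − g^{-1})ĉ ∈ FG. Then for q = p^m, the iterated group commutator (w, h, q) (commutator with h taken q times) in the unit group of FG equals 1 + ĉ·((g^{h^q} − g) − (g^{-h^q} − g^{-1})). -/
open MonoidAlgebra

/-- The augmentation map of a group algebra. -/
noncomputable def aug (F G : Type*) [CommSemiring F] [Group G] :
    MonoidAlgebra F G →ₐ[F] F := MonoidAlgebra.lift F F G 1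

/-- The classical involution `∑ a_g g ↦ ∑ a_g g⁻¹` of a group algebra. -/
noncomputable def classicalStar {F G : Type*} [CommSemiring F] [Group G]
    (x : MonoidAlgebra F G) : MonoidAlgebra F G := MonoidAlgebra.mapDomain (·⁻¹) x

/-- A unit of the group algebra is unitary if it is normalized (augmentation one)
and its classical star is its inverse. -/
def IsUnitaryUnit {F G : Type*} [CommSemiring F] [Group G]
    (u : (MonoidAlgebra F G)ˣ) : Prop :=
  aug F G (u : MonoidAlgebra F G) = 1 ∧
    classicalStar (u : MonoidAlgebra F G) = ((u⁻¹ : (MonoidAlgebra F G)ˣ) : MonoidAlgebra F G)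

/-- A group is locally nilpotent if every finitely generated subgroup is nilpotent. -/
def IsLocallyNilpotent (G : Type*) [Group G] : Prop :=
  ∀ H : Subgroup G, H.FG → Group.IsNilpotent H

/-- `V_*(FG)` is locally nilpotent: every finitely generated subgroup of the unit
group consisting of unitary units is nilpotent. -/
def VstarLocallyNilpotent (F G : Type*) [CommSemiring F] [Group G] : Prop :=
  ∀ S : Subgroup (MonoidAlgebra F G)ˣ, (∀ u ∈ S, IsUnitaryUnit u) → S.FG →
    Group.IsNilpotent S

/-- `V(FG)` is locally nilpotent: every finitely generated subgroup of the unit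
group consisting of normalized units is nilpotent. -/
def VLocallyNilpotent (F G : Type*) [CommSemiring F] [Group G] : Prop :=
  ∀ S : Subgroup (MonoidAlgebra F G)ˣ,
    (∀ u ∈ S, aug F G (u : MonoidAlgebra F G) = 1) → S.FG → Group.IsNilpotent S

/-- `ĉ = 1 + c + ⋯ + c^(p-1)` in the group algebra. -/
noncomputable def chat (F : Type*) {G : Type*} [CommSemiring F] [Group G]
    (c : G) (p : ℕ) : MonoidAlgebra F G :=
  ∑ i ∈ Finset.range p, MonoidAlgebra.of F G c ^ i

/-- The commutator `(x,y) = x⁻¹y⁻¹xy`. -/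
def gcomm {M : Type*} [Group M] (x y : M) : M := x⁻¹ * y⁻¹ * x * y

/-- Left-normed iterated commutator `(x, y, n)`. -/
def itComm {M : Type*} [Group M] (x y : M) : ℕ → M
  | 0 => x
  | n + 1 => gcomm (itComm x y n) y

section MyAux
set_option linter.unusedSectionVars false
variable {F G : Type*} [Field F] [Group G] (p : ℕ) [Fact p.Prime] [CharP F p]
  (c : G)

lemma my_chat_commute (hc : c ∈ Subgroup.center G) (x : MonoidAlgebra F G) : Commute (chat F c p) x := by
  refine Commute.sum_left _ _ _ fun i _ => ?_
  exact (MonoidAlgebra.of_commute (fun a' => (Subgroup.mem_center_iff.mp hc a').symm) x).pow_left i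

lemma my_chat_sq (hord : orderOf c = p) : chat F c p * chat F c p = 0 := by
  haveI : CharP (MonoidAlgebra F G) p := charP_of_injective_algebraMap' F p
  have hcp : (MonoidAlgebra.of F G c) ^ p = 1 := by
    rw [← map_pow, ← hord, pow_orderOf_eq_one, map_one]
  have key : chat F c p * MonoidAlgebra.of F G c = chat F c p := by
    have h2 : chat F c p * (MonoidAlgebra.of F G c - 1) = 0 := by
      have := geom_sum_mul (MonoidAlgebra.of F G c) p
      rw [hcp, sub_self] at this; exact this
    rw [mul_sub, mul_one, sub_eq_zero] at h2
    exact h2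
  have keypow : ∀ i, chat F c p * (MonoidAlgebra.of F G c) ^ i = chat F c p := by
    intro i
    induction i with
    | zero => simp
    | succ n ih => rw [pow_succ, ← mul_assoc, ih, key]
  calc chat F c p * chat F c p
      = ∑ i ∈ Finset.range p, chat F c p * (MonoidAlgebra.of F G c) ^ i := by
        rw [show chat F c p * chat F c p
            = chat F c p * ∑ i ∈ Finset.range p, MonoidAlgebra.of F G c ^ i from rfl,
          Finset.mul_sum]
    _ = ∑ _i ∈ Finset.range p, chat F c p := Finset.sum_congr rfl fun i _ => keypow i
    _ = (p : MonoidAlgebra F G) * chat F c p := by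
        rw [Finset.sum_const, Finset.card_range, nsmul_eq_mul]
    _ = 0 := by rw [CharP.cast_eq_zero, zero_mul]

lemma my_chat_mul_chat_mul (hc : c ∈ Subgroup.center G) (hord : orderOf c = p) (a b : MonoidAlgebra F G) :
    chat F c p * a * (chat F c p * b) = 0 := by
  calc chat F c p * a * (chat F c p * b)
      = chat F c p * ((a * chat F c p) * b) := by rw [mul_assoc, mul_assoc]
    _ = chat F c p * ((chat F c p * a) * b) := by rw [← (my_chat_commute p c hc a).eq]
    _ = chat F c p * chat F c p * (a * b) := by rw [mul_assoc (chat F c p) a b, ← mul_assoc]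
    _ = 0 := by rw [my_chat_sq p c hord, zero_mul]

lemma my_unit_inv_val (hc : c ∈ Subgroup.center G) (hord : orderOf c = p) (a : MonoidAlgebra F G) (u : (MonoidAlgebra F G)ˣ)
    (hu : (u : MonoidAlgebra F G) = 1 + chat F c p * a) :
    ((u⁻¹ : (MonoidAlgebra F G)ˣ) : MonoidAlgebra F G) = 1 - chat F c p * a := by
  apply Units.inv_eq_of_mul_eq_one_right
  rw [hu]
  have expand : (1 + chat F c p * a) * (1 - chat F c p * a)
      = 1 - chat F c p * a * (chat F c p * a) := by noncomm_ring
  rw [expand, my_chat_mul_chat_mul p c hc hord, sub_zero]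

lemma my_gcomm_val (hc : c ∈ Subgroup.center G) (hord : orderOf c = p) (h : G) (a : MonoidAlgebra F G) (u hu : (MonoidAlgebra F G)ˣ)
    (hu1 : (u : MonoidAlgebra F G) = 1 + chat F c p * a)
    (hh : (hu : MonoidAlgebra F G) = MonoidAlgebra.of F G h) :
    ((gcomm u hu : (MonoidAlgebra F G)ˣ) : MonoidAlgebra F G) =
      1 + chat F c p *
        (MonoidAlgebra.of F G h⁻¹ * a * MonoidAlgebra.of F G h - a) := by
  have hinv : ((u⁻¹ : (MonoidAlgebra F G)ˣ) : MonoidAlgebra F G) = 1 - chat F c p * a :=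
    my_unit_inv_val p c hc hord a u hu1
  have hhinv : ((hu⁻¹ : (MonoidAlgebra F G)ˣ) : MonoidAlgebra F G)
      = MonoidAlgebra.of F G h⁻¹ := by
    apply Units.inv_eq_of_mul_eq_one_right
    rw [hh, ← map_mul, mul_inv_cancel, map_one]
  set ch := chat F c p with hch
  set xi := MonoidAlgebra.of F G h⁻¹ with hxi
  set xh := MonoidAlgebra.of F G h with hxh
  set b := xi * a * xh with hb
  have hxixh : xi * xh = 1 := by rw [hxi, hxh, ← map_mul, inv_mul_cancel, map_one]
  have hmid : xi * ((1 + ch * a) * xh) = 1 + ch * b := by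
    calc xi * ((1 + ch * a) * xh)
        = xi * xh + xi * (ch * (a * xh)) := by
          rw [add_mul, one_mul, mul_add, mul_assoc]
      _ = 1 + ch * (xi * (a * xh)) := by
          rw [hxixh, ← mul_assoc xi ch, ← (my_chat_commute p c hc xi).eq, mul_assoc]
      _ = 1 + ch * b := by rw [hb, mul_assoc]
  have : ((gcomm u hu : (MonoidAlgebra F G)ˣ) : MonoidAlgebra F G)
      = ((u⁻¹ : (MonoidAlgebra F G)ˣ) : MonoidAlgebra F G) *
        ((hu⁻¹ : (MonoidAlgebra F G)ˣ) : MonoidAlgebra F G) *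
        (u : MonoidAlgebra F G) * (hu : MonoidAlgebra F G) := rfl
  rw [this, hinv, hhinv, hu1, hh]
  calc (1 - ch * a) * xi * (1 + ch * a) * xh
      = (1 - ch * a) * (xi * ((1 + ch * a) * xh)) := by simp only [mul_assoc]
    _ = (1 - ch * a) * (1 + ch * b) := by rw [hmid]
    _ = 1 + ch * b - ch * a - ch * a * (ch * b) := by noncomm_ring
    _ = 1 + ch * (b - a) := by
        rw [my_chat_mul_chat_mul p c hc hord, sub_zero, mul_sub]; abel

noncomputable def conjT (F : Type*) {G : Type*} [Field F] [Group G] (h : G) :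
    Module.End F (MonoidAlgebra F G) :=
  (LinearMap.mulRight F (MonoidAlgebra.of F G h)) ∘ₗ
    (LinearMap.mulLeft F (MonoidAlgebra.of F G h⁻¹))

lemma conjT_apply {F G : Type*} [Field F] [Group G] (h : G) (a : MonoidAlgebra F G) :
    conjT F h a = MonoidAlgebra.of F G h⁻¹ * a * MonoidAlgebra.of F G h := rfl

lemma conjT_pow {F G : Type*} [Field F] [Group G] (h : G) (n : ℕ) (a : MonoidAlgebra F G) :
    (conjT F h ^ n) a =
      MonoidAlgebra.of F G (h ^ n)⁻¹ * a * MonoidAlgebra.of F G (h ^ n) := by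
  induction n with
  | zero => simp [← MonoidAlgebra.one_def]
  | succ n ih =>
    rw [pow_succ', Module.End.mul_apply, ih, conjT_apply]
    rw [pow_succ, mul_inv_rev, map_mul, map_mul]
    noncomm_ring

end MyAux

theorem stmt6 (F G : Type*) [Field F] [Group G] (p : ℕ) [Fact p.Prime] [CharP F p]
    (c : G) (hc : c ∈ Subgroup.center G) (hord : orderOf c = p)
    (g h : G) (m : ℕ) (w hu : (MonoidAlgebra F G)ˣ)
    (hw : (w : MonoidAlgebra F G) =
      1 + (MonoidAlgebra.of F G g - MonoidAlgebra.of F G g⁻¹) * chat F c p)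
    (hh : (hu : MonoidAlgebra F G) = MonoidAlgebra.of F G h) :
    ((itComm w hu (p ^ m) : (MonoidAlgebra F G)ˣ) : MonoidAlgebra F G) =
      1 + chat F c p *
        ((MonoidAlgebra.of F G ((h ^ p ^ m)⁻¹ * g * h ^ p ^ m) - MonoidAlgebra.of F G g) -
         (MonoidAlgebra.of F G ((h ^ p ^ m)⁻¹ * g⁻¹ * h ^ p ^ m) -
          MonoidAlgebra.of F G g⁻¹)) := by
  haveI : CharP (Module.End F (MonoidAlgebra F G)) p := charP_of_injective_algebraMap' F p
  set a₀ : MonoidAlgebra F G := MonoidAlgebra.of F G g - MonoidAlgebra.of F G g⁻¹ with ha₀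
  set T := conjT F (G := G) h with hT
  have key : ∀ n, ((itComm w hu n : (MonoidAlgebra F G)ˣ) : MonoidAlgebra F G)
      = 1 + chat F c p * (((T - 1) ^ n) a₀) := by
    intro n
    induction n with
    | zero =>
      show (w : MonoidAlgebra F G) = _
      rw [hw, pow_zero, Module.End.one_apply, (my_chat_commute p c hc a₀).eq]
    | succ n ih =>
      have : ((itComm w hu (n+1) : (MonoidAlgebra F G)ˣ) : MonoidAlgebra F G)
          = ((gcomm (itComm w hu n) hu : (MonoidAlgebra F G)ˣ) : MonoidAlgebra F G) := rfl
      rw [this, my_gcomm_val p c hc hord h (((T - 1) ^ n) a₀) _ _ ih hh]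
      congr 1
      rw [pow_succ', Module.End.mul_apply, LinearMap.sub_apply, Module.End.one_apply,
        conjT_apply]
  rw [key (p ^ m), sub_pow_char_pow_of_commute _ _ (Commute.one_right T), one_pow,
    LinearMap.sub_apply, Module.End.one_apply, hT, conjT_pow]
  have expand : MonoidAlgebra.of F G (h ^ p ^ m)⁻¹ * a₀ * MonoidAlgebra.of F G (h ^ p ^ m)
      = MonoidAlgebra.of F G ((h ^ p ^ m)⁻¹ * g * h ^ p ^ m)
        - MonoidAlgebra.of F G ((h ^ p ^ m)⁻¹ * g⁻¹ * h ^ p ^ m) := by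
    rw [ha₀, mul_sub, sub_mul, ← map_mul, ← map_mul, ← map_mul, ← map_mul]
  rw [expand, ha₀]
  noncomm_ring
end

section
/- Let p = 2, F a field of characteristic 2, G a group with central element c of order 2, and g, h ∈ G. Let w = 1 + gĉ with ĉ = 1 + c. Then for k = 2^m, the iterated commutator (w, h, k) in the unit group of FG equals 1 + ĉ(g^{h^k} − g). Consequently, if (w, h, k) = 1, then (g, h^k) ∈ ⟨c⟩. -/
open MonoidAlgebra

/-!
Because `ĉ` is central with `ĉ² = 0`, elements `1 + ĉa` multiply by adding the `a`'s, so the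
commutator of `1 + ĉa` with a unit `u` is `1 + ĉ(u⁻¹au - a)`. Hence `(1 + ĉa, u, n) = 1 + ĉ(T - 1)ⁿa`
with `T` the conjugation by `u`, an additive endomorphism of the ring; in characteristic `p` the
Frobenius of the endomorphism ring turns `(T - 1)^(p^m)` into `T^(p^m) - 1`. If the commutator is
trivial then `ĉ(g' - g) = 0` for `g' = g^(h^k)`, and comparing coefficients at `g'` forces
`g' ∈ {g, cg}`.
-/

instance AddMonoid.End.charP (R : Type*) [Ring R] (p : ℕ) [CharP R p] :
    CharP (AddMonoid.End R) p := by
  refine ⟨fun n => ?_⟩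
  rw [← CharP.cast_eq_zero_iff R p]
  constructor
  · intro h
    simpa [AddMonoid.End.natCast_apply] using DFunLike.congr_fun h 1
  · intro h
    ext x
    simp [AddMonoid.End.natCast_apply, nsmul_eq_mul, h]

section CentralSquareZero

variable {R : Type*} [Ring R]

def unitConj (u : Rˣ) : AddMonoid.End R :=
  (AddMonoidHom.mulRight (u : R)).comp (AddMonoidHom.mulLeft (↑u⁻¹ : R))

theorem unitConj_apply (u : Rˣ) (a : R) : unitConj u a = ↑u⁻¹ * a * u := rfl

theorem unitConj_pow (u : Rˣ) (n : ℕ) : unitConj u ^ n = unitConj (u ^ n) := by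
  induction n with
  | zero => ext a; simp [unitConj_apply]
  | succ n ih =>
    ext a
    rw [pow_succ, AddMonoid.End.coe_mul, Function.comp_apply, ih, unitConj_apply,
      unitConj_apply, unitConj_apply, pow_succ', mul_inv_rev, Units.val_mul, Units.val_mul]
    noncomm_ring

variable {z : R} (hz : ∀ x, Commute z x) (hz2 : z * z = 0)
include hz hz2

theorem one_add_mul_mul_one_add_mul (a b : R) :
    (1 + z * a) * (1 + z * b) = 1 + z * (a + b) := by
  have hzero : z * a * (z * b) = 0 := by
    rw [mul_assoc, ← mul_assoc a, ← (hz a).eq, mul_assoc, ← mul_assoc, hz2, zero_mul]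
  calc (1 + z * a) * (1 + z * b) = 1 + z * (a + b) + z * a * (z * b) := by noncomm_ring
    _ = 1 + z * (a + b) := by rw [hzero, add_zero]

theorem Units.val_inv_of_val_eq_one_add_mul {x : Rˣ} {a : R} (hx : (x : R) = 1 + z * a) :
    ((x⁻¹ : Rˣ) : R) = 1 + z * -a :=
  Units.inv_eq_of_mul_eq_one_right <| by
    rw [hx, one_add_mul_mul_one_add_mul hz hz2, add_neg_cancel, mul_zero, add_zero]

theorem val_gcomm_of_val_eq_one_add_mul {x : Rˣ} {a : R} (hx : (x : R) = 1 + z * a) (u : Rˣ) :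
    ((gcomm x u : Rˣ) : R) = 1 + z * (unitConj u a - a) := by
  have hconj : (↑u⁻¹ * ↑x * ↑u : R) = 1 + z * unitConj u a := by
    rw [hx, unitConj_apply, mul_add, add_mul, mul_one, Units.inv_mul, ← mul_assoc,
      ← (hz (↑u⁻¹ : R)).eq]
    simp only [mul_assoc]
  calc ((gcomm x u : Rˣ) : R) = ↑x⁻¹ * (↑u⁻¹ * ↑x * ↑u) := by
        simp only [gcomm, Units.val_mul, mul_assoc]
    _ = 1 + z * (unitConj u a - a) := by
        rw [hconj, Units.val_inv_of_val_eq_one_add_mul hz hz2 hx,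
          one_add_mul_mul_one_add_mul hz hz2, neg_add_eq_sub]

theorem val_itComm_of_val_eq_one_add_mul {x : Rˣ} {a : R} (hx : (x : R) = 1 + z * a)
    (u : Rˣ) (n : ℕ) :
    ((itComm x u n : Rˣ) : R) = 1 + z * ((unitConj u - 1) ^ n) a := by
  induction n with
  | zero => simpa [itComm] using hx
  | succ n ih =>
    rw [itComm, val_gcomm_of_val_eq_one_add_mul hz hz2 ih, pow_succ', AddMonoid.End.coe_mul,
      Function.comp_apply]
    rfl

theorem val_itComm_char_pow_of_val_eq_one_add_mul (p : ℕ) [Fact p.Prime] [CharP R p]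
    {x : Rˣ} {a : R} (hx : (x : R) = 1 + z * a) (u : Rˣ) (m : ℕ) :
    ((itComm x u (p ^ m) : Rˣ) : R) = 1 + z * (↑(u ^ p ^ m)⁻¹ * a * ↑(u ^ p ^ m) - a) := by
  rw [val_itComm_of_val_eq_one_add_mul hz hz2 hx, sub_pow_char_pow_of_commute p m
    (Commute.one_right _), one_pow, unitConj_pow]
  rfl

end CentralSquareZero

section GroupAlgebra

variable {k G : Type*} [Group G]

theorem chat_two [CommSemiring k] (c : G) : chat k c 2 = 1 + of k G c := by
  rw [chat, Finset.sum_range_succ, Finset.sum_range_one, pow_zero, pow_one]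

theorem commute_chat [CommSemiring k] {c : G} (hc : c ∈ Subgroup.center G) (p : ℕ)
    (x : MonoidAlgebra k G) : Commute (chat k c p) x :=
  Commute.sum_left _ _ _ fun _ _ =>
    (of_commute (fun g => Subgroup.mem_center_iff.mp hc g |>.symm) x).pow_left _

theorem chat_two_mul_self [CommRing k] [CharP k 2] {c : G} (hc : c ^ 2 = 1) :
    chat k c 2 * chat k c 2 = 0 := by
  have htwo : (2 : MonoidAlgebra k G) = 0 := by
    rw [← map_ofNat (algebraMap k (MonoidAlgebra k G)), CharTwo.two_eq_zero, map_zero]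
  calc chat k c 2 * chat k c 2 = 2 * (1 + of k G c) + (of k G (c ^ 2) - 1) := by
        rw [chat_two, map_pow]; noncomm_ring
    _ = 0 := by rw [htwo, hc, map_one]; simp

theorem eq_or_eq_mul_of_one_add_of_mul_sub_eq_zero [Ring k] [Nontrivial k] {c x y : G}
    (hc : c ≠ 1) (h : (1 + of k G c) * (of k G x - of k G y) = 0) : x = y ∨ x = c * y := by
  by_contra! hne
  have hcx : x ≠ c * x := fun hcx => hc (right_eq_mul.mp hcx)
  have hcoeff := congrArg (fun f : MonoidAlgebra k G => f.coeff x) h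
  simp only [one_mul, mul_sub, add_mul, of_apply, single_mul_single, mul_one, coeff_sub,
    coeff_add, coeff_single, Finsupp.sub_apply, Finsupp.add_apply, Finsupp.single_eq_same,
    Finsupp.single_eq_of_ne hne.1, Finsupp.single_eq_of_ne hne.2,
    Finsupp.single_eq_of_ne hcx] at hcoeff
  simp at hcoeff

end GroupAlgebra

theorem stmt15 (F G : Type*) [Field F] [Group G] [CharP F 2]
    (c : G) (hc : c ∈ Subgroup.center G) (hord : orderOf c = 2)
    (g h : G) (m : ℕ) (w hu : (MonoidAlgebra F G)ˣ)
    (hw : (w : MonoidAlgebra F G) = 1 + MonoidAlgebra.of F G g * chat F c 2)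
    (hh : (hu : MonoidAlgebra F G) = MonoidAlgebra.of F G h) :
    ((itComm w hu (2 ^ m) : (MonoidAlgebra F G)ˣ) : MonoidAlgebra F G) =
      1 + chat F c 2 *
        (MonoidAlgebra.of F G ((h ^ 2 ^ m)⁻¹ * g * h ^ 2 ^ m) - MonoidAlgebra.of F G g) ∧
      (itComm w hu (2 ^ m) = 1 → gcomm g (h ^ 2 ^ m) ∈ Subgroup.zpowers c) := by
  have : CharP (MonoidAlgebra F G) 2 := charP_of_injective_algebraMap' F 2
  have hz := commute_chat (k := F) hc 2
  have hz2 := chat_two_mul_self (k := F) (hord ▸ pow_orderOf_eq_one c)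
  have hw' : (w : MonoidAlgebra F G) = 1 + chat F c 2 * of F G g := by rw [hw, (hz _).eq]
  have hpow : ((hu ^ 2 ^ m : (MonoidAlgebra F G)ˣ) : MonoidAlgebra F G) = of F G (h ^ 2 ^ m) := by
    rw [Units.val_pow_eq_pow_val, hh, map_pow]
  have hpow_inv : (↑(hu ^ 2 ^ m)⁻¹ : MonoidAlgebra F G) = of F G (h ^ 2 ^ m)⁻¹ :=
    Units.inv_eq_of_mul_eq_one_right (by rw [hpow, ← map_mul, mul_inv_cancel, map_one])
  have hformula := val_itComm_char_pow_of_val_eq_one_add_mul hz hz2 2 hw' hu m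
  rw [hpow_inv, hpow, ← map_mul, ← map_mul] at hformula
  refine ⟨hformula, fun htriv => ?_⟩
  have hzero : chat F c 2 * (of F G ((h ^ 2 ^ m)⁻¹ * g * h ^ 2 ^ m) - of F G g) = 0 := by
    simpa [htriv] using hformula
  have hc1 : c ≠ 1 := fun h1 => by simp [h1] at hord
  have hgcomm : gcomm g (h ^ 2 ^ m) = g⁻¹ * ((h ^ 2 ^ m)⁻¹ * g * h ^ 2 ^ m) := by
    simp only [gcomm, mul_assoc]
  rw [chat_two] at hzero
  rcases eq_or_eq_mul_of_one_add_of_mul_sub_eq_zero hc1 hzero with heq | heq <;>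
    rw [hgcomm, heq]
  · simp
  · rw [← Subgroup.mem_center_iff.mp hc g, inv_mul_cancel_left]
    exact Subgroup.mem_zpowers c
end
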